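/- (Corollaire) For every derivation δ: A → M of A with values in a diagonal bimodule M there exists a unique bimodule homomorphism i_δ: Ω¹_Der(A) → M such that δ = i_δ ∘ d, where d: A → Ω¹_Der(A) is given by (da)(δ') = δ'(a). In other words, d: A → Ω¹_Der(A) is universal for derivations of A with values in diagonal bimodules. -/

import Mathlib

/-!
Embed `M` into `A^ι` by `f`. Each coordinate `a ↦ f (δ a) i` is a derivation `εᵢ ∈ Der(A)`, so
evaluation at the family `(εᵢ)` is a bimodule map `C¹(Der(A), A) → A^ι` sending `d a` to
`f (δ a)`. It therefore maps `Ω¹_Der(A)` into the image of `f`, and composing with `f⁻¹` gives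
`i_δ`; uniqueness holds because `dA` generates `Ω¹_Der(A)`.
-/
set_option maxHeartbeats 1000000
set_option synthInstance.maxHeartbeats 400000

open TensorProduct MulOpposite

universe uK uA uM

section Der
variable (K A : Type*) [CommRing K] [Ring A] [Algebra K A]

/-- `Der(A)`: the `K`-module of derivations of `A` into itself. -/
def derSub : Submodule K (A →ₗ[K] A) where
  carrier := {f : A →ₗ[K] A | ∀ a b : A, f (a * b) = a * f b + f a * b}
  add_mem' := by
    intro f g hf hg a b
    simp only [LinearMap.add_apply, hf a b, hg a b, mul_add, add_mul]
    abel
  zero_mem' := by intro a b; simp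
  smul_mem' := by
    intro k f hf a b
    simp only [LinearMap.smul_apply, hf a b, smul_add, Algebra.mul_smul_comm,
      Algebra.smul_mul_assoc]

/-- The map `d : A → C¹(Der(A), A)`, `(d a) δ = δ a`. -/
def dDer (a : A) : (derSub K A) →ₗ[K] A where
  toFun δ := (δ : A →ₗ[K] A) a
  map_add' δ ε := by simp
  map_smul' k δ := by simp

/-- The bimodule structure on `C¹(Der(A), A)`, `(a • f • b) δ = a * f δ * b`. -/
noncomputable def bimoduleC1 : Module (A ⊗[K] Aᵐᵒᵖ) ((derSub K A) →ₗ[K] A) :=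
  haveI h1 : SMulCommClass A Aᵐᵒᵖ ((derSub K A) →ₗ[K] A) :=
    ⟨fun a b f => LinearMap.ext fun x => smul_comm a b (f x)⟩
  haveI h2 : IsScalarTower K A ((derSub K A) →ₗ[K] A) :=
    ⟨fun k a f => LinearMap.ext fun x => smul_assoc k a (f x)⟩
  haveI h3 : IsScalarTower K Aᵐᵒᵖ ((derSub K A) →ₗ[K] A) :=
    ⟨fun k b f => LinearMap.ext fun x => smul_assoc k b (f x)⟩
  TensorProduct.Algebra.module

attribute [local instance] bimoduleC1

/-- `Ω¹_Der(A)`: the sub-bimodule of `C¹(Der(A), A)` generated by `dA`. -/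
noncomputable def omegaDer : Submodule (A ⊗[K] Aᵐᵒᵖ) ((derSub K A) →ₗ[K] A) :=
  Submodule.span _ (Set.range (dDer K A))

end Der


section Statement
variable (K : Type uK) (A : Type uA) [CommRing K] [Ring A] [Algebra K A]

attribute [local instance] bimoduleC1

/-- `A` as a bimodule over itself. -/
noncomputable def bimoduleBA : Module (A ⊗[K] Aᵐᵒᵖ) A := TensorProduct.Algebra.module

attribute [local instance] bimoduleBA

/-- A bimodule is *diagonal* if there is an injective bimodule homomorphism `M → A^ι`
for some index set `ι`. -/
def IsDiagonalBimodule (M : Type uM) [AddCommGroup M] [Module (A ⊗[K] Aᵐᵒᵖ) M] : Prop :=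
  ∃ (ι : Type (max uA uM)) (f : M →ₗ[A ⊗[K] Aᵐᵒᵖ] (ι → A)), Function.Injective f

theorem Submodule.span_range_mk_eq_top {R ι N : Type*} [Ring R] [AddCommGroup N]
    [Module R N] (v : ι → N) :
    span R (Set.range fun i => (⟨v i, subset_span (Set.mem_range_self i)⟩ :
      span R (Set.range v))) = ⊤ := by
  convert span_span_coe_preimage (R := R) (s := Set.range v)
  ext ⟨x, hx⟩
  simp [Subtype.ext_iff]

theorem LinearMap.existsUnique_span_lift {R ι N M P : Type*} [Ring R] [AddCommGroup N]
    [Module R N] [AddCommGroup M] [Module R M] [AddCommGroup P] [Module R P]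
    (v : ι → N) (m : ι → M) (Θ : N →ₗ[R] P) (f : M →ₗ[R] P) (hf : Function.Injective f)
    (h : ∀ i, Θ (v i) = f (m i)) :
    ∃! φ : Submodule.span R (Set.range v) →ₗ[R] M,
      ∀ i, m i = φ ⟨v i, Submodule.subset_span (Set.mem_range_self i)⟩ := by
  have hΘ : Submodule.span R (Set.range v) ≤ (LinearMap.range f).comap Θ :=
    Submodule.span_le.2 <| Set.range_subset_iff.2 fun i => ⟨m i, (h i).symm⟩
  let φ := (LinearEquiv.ofInjective f hf).symm.toLinearMap ∘ₗ
    (Θ ∘ₗ Submodule.subtype _).codRestrict _ fun x => hΘ x.2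
  have hφ : ∀ i, m i = φ ⟨v i, Submodule.subset_span (Set.mem_range_self i)⟩ := fun i => by
    refine hf ?_
    rw [← h, ← LinearEquiv.ofInjective_apply f (h := hf)]
    simp [φ]
  refine ⟨φ, hφ, fun ψ hψ => ?_⟩
  exact LinearMap.ext_on_range (Submodule.span_range_mk_eq_top v) fun i =>
    (hψ i).symm.trans (hφ i)

theorem bimoduleBA_tmul_smul (a : A) (b : Aᵐᵒᵖ) (x : A) : (a ⊗ₜ[K] b) • x = a * x * unop b :=
  (mul_assoc _ _ _).symm

theorem bimoduleC1_smul_apply (t : A ⊗[K] Aᵐᵒᵖ) (ω : derSub K A →ₗ[K] A) (δ' : derSub K A) :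
    (t • ω) δ' = t • ω δ' := by
  induction t using TensorProduct.induction_on with
  | zero =>
    exact (LinearMap.congr_fun (zero_smul (A ⊗[K] Aᵐᵒᵖ) ω) δ').trans
      (zero_smul (A ⊗[K] Aᵐᵒᵖ) (ω δ')).symm
  | tmul a b => rfl
  | add x y hx hy => rw [add_smul, add_smul, LinearMap.add_apply, hx, hy]

noncomputable def evalDer (δ' : derSub K A) : (derSub K A →ₗ[K] A) →ₗ[A ⊗[K] Aᵐᵒᵖ] A where
  toFun ω := ω δ'
  map_add' _ _ := rfl
  map_smul' t ω := bimoduleC1_smul_apply K A t ω δ'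

def IsBiderivation {M : Type*} [AddCommGroup M] [Module (A ⊗[K] Aᵐᵒᵖ) M] [Module K M]
    (δ : A →ₗ[K] M) : Prop :=
  ∀ a b : A, δ (a * b) = (a ⊗ₜ[K] (1 : Aᵐᵒᵖ)) • δ b + ((1 : A) ⊗ₜ[K] (op b)) • δ a

namespace IsBiderivation

variable {K A} {M : Type*} [AddCommGroup M] [Module (A ⊗[K] Aᵐᵒᵖ) M] [Module K M]
  {δ : A →ₗ[K] M}

theorem map_one (hδ : IsBiderivation K A δ) : δ 1 = 0 := by
  simpa [← Algebra.TensorProduct.one_def] using hδ 1 1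

-- `δ` kills `K · 1`, so scalars from `K` act on `δ a` through the bimodule structure.
theorem map_smul_eq (hδ : IsBiderivation K A δ) (k : K) (a : A) :
    δ (k • a) = (algebraMap K A k ⊗ₜ[K] (1 : Aᵐᵒᵖ)) • δ a := by
  have hk : δ (algebraMap K A k) = 0 := by
    rw [Algebra.algebraMap_eq_smul_one, map_smul, hδ.map_one, smul_zero]
  rw [Algebra.smul_def, hδ, hk, smul_zero, add_zero]

noncomputable def compDer (hδ : IsBiderivation K A δ) (g : M →ₗ[A ⊗[K] Aᵐᵒᵖ] A) :
    derSub K A where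
  val :=
    { toFun a := g (δ a)
      map_add' a b := by rw [map_add, map_add]
      map_smul' k a := by
        rw [hδ.map_smul_eq, map_smul, bimoduleBA_tmul_smul, unop_one, mul_one, RingHom.id_apply,
          Algebra.smul_def] }
  property a b := by
    change g (δ (a * b)) = a * g (δ b) + g (δ a) * b
    rw [hδ, map_add, map_smul, map_smul, bimoduleBA_tmul_smul, bimoduleBA_tmul_smul, unop_one,
      unop_op, mul_one, one_mul]

end IsBiderivation

theorem omegaDer_universal_for_diagonal_bimodules
    (M : Type uM) [AddCommGroup M] [Module (A ⊗[K] Aᵐᵒᵖ) M]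
    [Module K M]
    (hM : IsDiagonalBimodule K A M)
    (δ : A →ₗ[K] M)
    (hδ : ∀ a b : A, δ (a * b)
      = (a ⊗ₜ[K] (1 : Aᵐᵒᵖ)) • δ b + ((1 : A) ⊗ₜ[K] (op b)) • δ a) :
    ∃! φ : (omegaDer K A) →ₗ[A ⊗[K] Aᵐᵒᵖ] M,
      ∀ a : A, δ a = φ ⟨dDer K A a, Submodule.subset_span (Set.mem_range_self a)⟩ := by
  obtain ⟨ι, f, hf⟩ := hM
  exact LinearMap.existsUnique_span_lift (dDer K A) δ
    (LinearMap.pi fun i => evalDer K A (IsBiderivation.compDer hδ (LinearMap.proj i ∘ₗ f)))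
    f hf fun a => rfl

end Statement
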